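/- Fix ε, δ ∈ (0,1), observables o_1,…,o_L, and measurements P = [p_1,…,p_M]. If the confidence bound Conf_ε(O;P) := ∑_{ℓ=1}^L exp(−(ε²/2)·h(o_ℓ;P)) satisfies Conf_ε(O;P) ≤ δ/2, then with probability at least 1 − δ, the empirical averages satisfy |ω̂_ℓ − ω_ℓ| ≤ ε simultaneously for all 1 ≤ ℓ ≤ L. -/

import Mathlib

inductive Pauli | I | X | Y | Z
deriving DecidableEq

instance instFintypePauli : Fintype Pauli :=
  Fintype.ofList [Pauli.I, Pauli.X, Pauli.Y, Pauli.Z] (by intro x; cases x <;> simp)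

inductive Axis | X | Y | Z
deriving DecidableEq

instance instFintypeAxis : Fintype Axis :=
  Fintype.ofList [Axis.X, Axis.Y, Axis.Z] (by intro x; cases x <;> simp)

def Axis.toPauli : Axis → Pauli
  | .X => .X
  | .Y => .Y
  | .Z => .Z

/-- single-qubit hitting relation: `o = I` or `o = p`. -/
def hit1 (o : Pauli) (p : Axis) : Prop := o = Pauli.I ∨ o = p.toPauli

instance (o : Pauli) (p : Axis) : Decidable (hit1 o p) := by unfold hit1; infer_instance

/-- `o ▷ p`: every coordinate of `o` is `I` or matches `p`. -/
def hits {n : ℕ} (o : Fin n → Pauli) (p : Fin n → Axis) : Prop := ∀ k, hit1 (o k) (p k)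

instance {n : ℕ} (o : Fin n → Pauli) (p : Fin n → Axis) : Decidable (hits o p) := by
  unfold hits; infer_instance

/-- weight: number of non-identity coordinates. -/
def weight {n : ℕ} (o : Fin n → Pauli) : ℕ :=
  (Finset.univ.filter (fun k => o k ≠ Pauli.I)).card

/-- hitting count of `o` among the measurements `P`. -/
def hitCount {n M : ℕ} (o : Fin n → Pauli) (P : Fin M → Fin n → Axis) : ℕ :=
  (Finset.univ.filter (fun m => hits o (P m))).card

/-- the confidence bound. -/
noncomputable def Conf {n M L : ℕ} (ε : ℝ) (O : Fin L → Fin n → Pauli)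
    (P : Fin M → Fin n → Axis) : ℝ :=
  ∑ ℓ, Real.exp (-(ε ^ 2 / 2) * (hitCount (O ℓ) P))

/-! For each `ℓ`, `ω̂_ℓ` is the average of `h(o_ℓ;P)` independent outcomes in `[-1, 1]` with mean
`ω_ℓ`. By Hoeffding's lemma each centred outcome is `1`-sub-Gaussian, so the two-sided Chernoff
bound for their sum gives `P(|ω̂_ℓ - ω_ℓ| > ε) ≤ 2 exp(-ε² h(o_ℓ;P) / 2)`. A union bound over `ℓ`
bounds the failure probability by `2 Conf_ε(O;P) ≤ δ`. -/

open MeasureTheory ProbabilityTheory Finset Real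
open scoped NNReal

namespace ProbabilityTheory

variable {Ω : Type*} [MeasurableSpace Ω] {μ : Measure Ω}

lemma HasSubgaussianMGF.measureReal_abs_ge_le [IsFiniteMeasure μ] {X : Ω → ℝ}
    {c : ℝ≥0} (h : HasSubgaussianMGF X c μ) {t : ℝ} (ht : 0 ≤ t) :
    μ.real {x | t ≤ |X x|} ≤ 2 * exp (-t ^ 2 / (2 * c)) := by
  calc μ.real {x | t ≤ |X x|} ≤ μ.real ({x | t ≤ X x} ∪ {x | t ≤ (-X) x}) :=
        measureReal_mono fun x (hx : t ≤ |X x|) => by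
          rcases le_abs'.mp hx with hneg | hpos
          · exact Or.inr (le_neg.mp hneg)
          · exact Or.inl hpos
    _ ≤ μ.real {x | t ≤ X x} + μ.real {x | t ≤ (-X) x} := measureReal_union_le _ _
    _ ≤ exp (-t ^ 2 / (2 * c)) + exp (-t ^ 2 / (2 * c)) :=
        add_le_add (h.measure_ge_le ht) (h.neg.measure_ge_le ht)
    _ = 2 * exp (-t ^ 2 / (2 * c)) := by ring

lemma iIndepFun.hasSubgaussianMGF_sum_sub_integral {ι : Type*}
    {X : ι → Ω → ℝ} (hind : iIndepFun X μ) (hmeas : ∀ i, AEMeasurable (X i) μ) {a b : ℝ}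
    (hb : ∀ i, ∀ᵐ x ∂μ, X i x ∈ Set.Icc a b) (S : Finset ι) :
    HasSubgaussianMGF (fun x => ∑ i ∈ S, (X i x - μ[X i])) (#S * (‖b - a‖₊ / 2) ^ 2) μ := by
  have := hind.isProbabilityMeasure
  have hcentred : iIndepFun (fun i x => X i x - μ[X i]) μ :=
    hind.comp (fun i (y : ℝ) => y - ∫ z, X i z ∂μ) fun i => measurable_sub_const _
  simpa using HasSubgaussianMGF.sum_of_iIndepFun hcentred (s := S)
    fun i _ => hasSubgaussianMGF_of_mem_Icc (hmeas i) (hb i)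

lemma iIndepFun.measureReal_abs_average_sub_gt_le {ι : Type*}
    {X : ι → Ω → ℝ} (hind : iIndepFun X μ) (hmeas : ∀ i, AEMeasurable (X i) μ)
    (hb : ∀ i, ∀ᵐ x ∂μ, X i x ∈ Set.Icc (-1) 1) {S : Finset ι} {ω : ℝ}
    (hmean : ∀ i ∈ S, μ[X i] = ω) {ε : ℝ} (hε : 0 ≤ ε) :
    μ.real {x | ε < |(∑ i ∈ S, X i x) / #S - ω|} ≤ 2 * exp (-(ε ^ 2 / 2) * #S) := by
  have := hind.isProbabilityMeasure
  have hsub : {x | ε < |(∑ i ∈ S, X i x) / #S - ω|} ⊆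
      {x | ε * #S ≤ |∑ i ∈ S, (X i x - μ[X i])|} := by
    intro x hx
    simp only [Set.mem_ofPred_eq] at hx ⊢
    rw [sum_sub_distrib, sum_congr rfl hmean, sum_const, nsmul_eq_mul]
    rcases (#S).eq_zero_or_pos with h0 | hpos
    · simp [h0]
    · have hS : (0 : ℝ) < #S := by exact_mod_cast hpos
      rw [show (∑ i ∈ S, X i x) / #S - ω = (∑ i ∈ S, X i x - #S * ω) / #S by field_simp,
        abs_div, abs_of_pos hS, lt_div_iff₀ hS] at hx
      exact hx.le
  calc μ.real {x | ε < |(∑ i ∈ S, X i x) / #S - ω|}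
      ≤ μ.real {x | ε * #S ≤ |∑ i ∈ S, (X i x - μ[X i])|} := measureReal_mono hsub
    _ ≤ 2 * exp (-(ε * #S) ^ 2 / (2 * ((#S * (‖(1 : ℝ) - -1‖₊ / 2) ^ 2 : ℝ≥0) : ℝ))) :=
        (hind.hasSubgaussianMGF_sum_sub_integral hmeas hb S).measureReal_abs_ge_le (by positivity)
    _ = 2 * exp (-(ε ^ 2 / 2) * #S) := by
        rcases (#S).eq_zero_or_pos with h0 | hpos
        · simp [h0]
        · have : ‖(1 : ℝ) - -1‖₊ = 2 := by norm_num
          simp only [this]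
          push_cast
          congr 1
          field_simp

lemma one_sub_sum_measureReal_compl_le_measureReal_iInter [IsProbabilityMeasure μ] {ι : Type*}
    [Fintype ι] (A : ι → Set Ω) : 1 - ∑ i, μ.real (A i)ᶜ ≤ μ.real (⋂ i, A i) := by
  have hsplit : 1 ≤ μ.real (⋂ i, A i) + μ.real (⋂ i, A i)ᶜ := by
    simpa only [Set.union_compl_self, probReal_univ] using
      measureReal_union_le (μ := μ) (⋂ i, A i) (⋂ i, A i)ᶜ
  have hunion : μ.real (⋂ i, A i)ᶜ ≤ ∑ i, μ.real (A i)ᶜ := by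
    simpa only [Set.compl_iInter] using measureReal_iUnion_fintype_le (μ := μ) fun i => (A i)ᶜ
  linarith

end ProbabilityTheory

theorem stmt5_general {Ω : Type*} [MeasurableSpace Ω] (μ : Measure Ω) [IsProbabilityMeasure μ]
    (n M L : ℕ) (O : Fin L → Fin n → Pauli) (P : Fin M → Fin n → Axis)
    (s : Fin L → Fin M → Ω → ℝ)
    (hmeas : ∀ ℓ m, Measurable (s ℓ m))
    (hind : ∀ ℓ, iIndepFun (s ℓ) μ)
    (hval : ∀ ℓ m x, s ℓ m x = 1 ∨ s ℓ m x = -1)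
    (ω : Fin L → ℝ)
    (hmean : ∀ ℓ m, hits (O ℓ) (P m) → (∫ x, s ℓ m x ∂μ) = ω ℓ)
    (ωhat : Fin L → Ω → ℝ)
    (hhat : ∀ ℓ x, ωhat ℓ x =
      if hitCount (O ℓ) P = 0 then 0
      else (∑ m ∈ Finset.univ.filter (fun m => hits (O ℓ) (P m)), s ℓ m x)
             / (hitCount (O ℓ) P : ℝ))
    (ε δ : ℝ) (hε : ε ∈ Set.Ioo (0 : ℝ) 1)
    (hconf : Conf ε O P ≤ δ / 2) :
    ENNReal.ofReal (1 - δ) ≤ μ {x | ∀ ℓ, |ωhat ℓ x - ω ℓ| ≤ ε} := by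
  have hbad ℓ : μ.real {x | ε < |ωhat ℓ x - ω ℓ|} ≤
      2 * exp (-(ε ^ 2 / 2) * hitCount (O ℓ) P) := by
    -- the `if` in `hhat` is redundant, since division by `0` gives `0` anyway
    have hωhat : ωhat ℓ = fun x =>
        (∑ m ∈ univ.filter (fun m => hits (O ℓ) (P m)), s ℓ m x) / hitCount (O ℓ) P := by
      funext x
      rw [hhat]
      split_ifs with h <;> simp [h]
    rw [hωhat]
    refine (hind ℓ).measureReal_abs_average_sub_gt_le (fun m => (hmeas ℓ m).aemeasurable)
      (fun m => ae_of_all _ fun x => ?_) (fun m hm => hmean ℓ m (mem_filter.mp hm).2) hε.1.le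
    rcases hval ℓ m x with h | h <;> norm_num [h]
  have hgood : 1 - δ ≤ μ.real {x | ∀ ℓ, |ωhat ℓ x - ω ℓ| ≤ ε} :=
    calc 1 - δ ≤ 1 - ∑ ℓ, 2 * exp (-(ε ^ 2 / 2) * hitCount (O ℓ) P) := by
          rw [← mul_sum]
          unfold Conf at hconf
          linarith
      _ ≤ 1 - ∑ ℓ, μ.real {x | ε < |ωhat ℓ x - ω ℓ|} := by gcongr with ℓ; exact hbad ℓ
      _ ≤ μ.real {x | ∀ ℓ, |ωhat ℓ x - ω ℓ| ≤ ε} := by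
          simpa [Set.ofPred_forall, Set.compl_ofPred] using
            one_sub_sum_measureReal_compl_le_measureReal_iInter (μ := μ)
              fun ℓ => {x | |ωhat ℓ x - ω ℓ| ≤ ε}
  exact ENNReal.ofReal_le_of_le_toReal hgood

/-- if the confidence bound is at most `δ/2`, then with probability at least
`1 - δ` all `L` empirical averages are `ε`-accurate simultaneously. -/
theorem stmt5 {Ω : Type*} [MeasurableSpace Ω] (μ : Measure Ω) [IsProbabilityMeasure μ]
    (n M L : ℕ) (O : Fin L → Fin n → Pauli) (P : Fin M → Fin n → Axis)
    (s : Fin L → Fin M → Ω → ℝ)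
    (hmeas : ∀ ℓ m, Measurable (s ℓ m))
    (hind : ∀ ℓ, iIndepFun (s ℓ) μ)
    (hval : ∀ ℓ m x, s ℓ m x = 1 ∨ s ℓ m x = -1)
    (ω : Fin L → ℝ) (hω : ∀ ℓ, |ω ℓ| ≤ 1)
    (hmean : ∀ ℓ m, hits (O ℓ) (P m) → (∫ x, s ℓ m x ∂μ) = ω ℓ)
    (ωhat : Fin L → Ω → ℝ)
    (hhat : ∀ ℓ x, ωhat ℓ x =
      if hitCount (O ℓ) P = 0 then 0
      else (∑ m ∈ Finset.univ.filter (fun m => hits (O ℓ) (P m)), s ℓ m x)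
             / (hitCount (O ℓ) P : ℝ))
    (ε δ : ℝ) (hε : ε ∈ Set.Ioo (0 : ℝ) 1) (hδ : δ ∈ Set.Ioo (0 : ℝ) 1)
    (hconf : Conf ε O P ≤ δ / 2) :
    ENNReal.ofReal (1 - δ) ≤ μ {x | ∀ ℓ, |ωhat ℓ x - ω ℓ| ≤ ε} :=
  stmt5_general μ n M L O P s hmeas hind hval ω hmean ωhat hhat ε δ hε hconf
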